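/- Let k ≥ 2 be an integer and define the optimal degree d(r) = ⌊(k+1)/(k-r)⌋ for integers 0 ≤ r ≤ k-2, and d(k-1) = k. Then for every integer r with 0 ≤ r ≤ k-1, the revealing probability satisfies p(d(r), r) ≥ 1/e, where e is Euler's number. -/

import Mathlib

/-- The revealing probability of an encoding symbol of degree `d` when `r` of the `k`
message symbols are known: `p(d, r) = (k - r) · C(r, d-1) / C(k, d)`. -/
def revealProb (k d r : ℕ) : ℚ :=
  ((k : ℚ) - r) * (r.choose (d - 1)) / (k.choose d)

/-- The optimal degree: `d(r) = ⌊(k+1)/(k-r)⌋` for `0 ≤ r ≤ k-2`, and `d(k-1) = k`. -/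
def optDeg (k r : ℕ) : ℕ :=
  if r = k - 1 then k else ⌊((k : ℚ) + 1) / ((k : ℚ) - r)⌋₊

/-!
For `r = k - 1` the probability is `1`. Otherwise, with `m = k - r ≥ 2` unknown symbols, write
`k + 1 = m d + t` with `d = d(r)` and `0 ≤ t < m`. Cancelling factorials,
`p(d, r) = (m d / k) ∏_{j < d-1} (r - j) / (k - 1 - j)`, and each factor is at least
`q = 1 - (m - 1) / (k - d + 1)`. Both `m d / k` and `q` are bounded below via
`log x ≥ 1 - 1/x`, and the choice `d = ⌊(k+1)/m⌋` is exactly what makes the two resulting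
exponents sum to at least `-1`.
-/

open Real Finset
open scoped Nat

lemma revealProb_self_pred {k : ℕ} (hk : 1 ≤ k) : revealProb k k (k - 1) = 1 := by
  rw [revealProb, Nat.choose_self, Nat.choose_self]
  push_cast [hk]
  ring

lemma optDeg_eq_div {k r : ℕ} (hr : r + 1 < k) : optDeg k r = (k + 1) / (k - r) := by
  rw [optDeg, if_neg (by omega), ← Nat.floor_div_eq_div (K := ℚ)]
  push_cast [show r ≤ k by omega]
  rfl

lemma cast_revealProb_succ (N n r : ℕ) :
    (revealProb (N + 1) (n + 1) r : ℝ) =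
      ((N + 1 - r) * (n + 1) / (N + 1)) * (r.descFactorial n / N.descFactorial n) := by
  have hr : (r.choose n : ℝ) = r.descFactorial n / n ! := by
    rw [Nat.descFactorial_eq_factorial_mul_choose]
    push_cast
    field_simp
  have hN : ((N + 1).choose (n + 1) : ℝ) = (N + 1) * N.descFactorial n / ((n + 1) * n !) := by
    have h : (N + 1).descFactorial (n + 1) = (n + 1) ! * (N + 1).choose (n + 1) :=
      Nat.descFactorial_eq_factorial_mul_choose _ _
    rw [Nat.succ_descFactorial_succ, Nat.factorial_succ] at h
    rw [eq_div_iff (by positivity)]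
    norm_cast
    rw [h]
    ring
  rw [revealProb, Nat.add_sub_cancel]
  push_cast
  rw [hr, hN, div_div_eq_mul_div]
  field_simp

lemma pow_mul_descFactorial_le {q : ℝ} (hq : 0 ≤ q) {N R n : ℕ}
    (h : ∀ j < n, q * (N - j) ≤ R - j) (hn : n ≤ N) :
    q ^ n * N.descFactorial n ≤ R.descFactorial n := by
  have factor_le : ∀ j < n,
      0 ≤ q * ((N - j : ℕ) : ℝ) ∧ q * ((N - j : ℕ) : ℝ) ≤ ((R - j : ℕ) : ℝ) := by
    intro j hj
    have hjN : j ≤ N := by omega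
    have hfac : 0 ≤ q * ((N : ℝ) - j) := mul_nonneg hq (sub_nonneg.2 (by exact_mod_cast hjN))
    have hjR : j ≤ R := by exact_mod_cast (by linarith [h j hj] : (j : ℝ) ≤ R)
    rw [Nat.cast_sub hjN, Nat.cast_sub hjR]
    exact ⟨hfac, h j hj⟩
  rw [Nat.descFactorial_eq_prod_range, Nat.descFactorial_eq_prod_range, Nat.cast_prod,
    Nat.cast_prod, ← card_range n, ← prod_const, card_range, ← prod_mul_distrib]
  exact prod_le_prod (fun j hj => (factor_le j (mem_range.1 hj)).1)
    (fun j hj => (factor_le j (mem_range.1 hj)).2)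

lemma one_sub_div_pow_mul_descFactorial_le {N s n : ℕ} (h : s + n ≤ N + 1) (hn : n ≤ N) :
    (1 - s / (N + 1 - n : ℝ)) ^ n * N.descFactorial n ≤ (N - s).descFactorial n := by
  have hD : 0 < (N + 1 - n : ℝ) := by
    have : (n : ℝ) ≤ N := by exact_mod_cast hn
    linarith
  refine pow_mul_descFactorial_le ?_ (fun j hj => ?_) hn
  · rw [sub_nonneg, div_le_one hD, le_sub_iff_add_le]
    exact_mod_cast h
  · have hjD : (N + 1 - n : ℝ) ≤ N - j := by
      have : (j : ℝ) + 1 ≤ n := by exact_mod_cast hj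
      linarith
    calc (1 - s / (N + 1 - n : ℝ)) * (N - j) = N - j - s * ((N - j) / (N + 1 - n)) := by ring
      _ ≤ N - j - s * 1 := by gcongr; exact (one_le_div hD).2 hjD
      _ = ((N - s : ℕ) : ℝ) - j := by push_cast [show s ≤ N by omega]; ring

lemma exp_one_sub_inv_le {x : ℝ} (hx : 0 < x) : exp (1 - x⁻¹) ≤ x := by
  simpa [exp_log hx] using exp_le_exp.2 (one_sub_inv_le_log_of_pos hx)

lemma exp_le_mul_pow {x q : ℝ} (hx : 0 < x) (hq : 0 < q) (n : ℕ) :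
    exp (1 - x⁻¹ + n * (1 - q⁻¹)) ≤ x * q ^ n := by
  rw [exp_add, exp_nat_mul]
  gcongr
  · exact exp_one_sub_inv_le hx
  · exact exp_one_sub_inv_le hq

lemma exp_neg_one_le_mul_one_sub_div_pow {a t k : ℝ} (n : ℕ) (ht : 0 ≤ t) (hta : t ≤ a)
    (hk : k + 1 = (a + 1) * (n + 1) + t) (hpos : 0 < a * n + t) :
    exp (-1) ≤ (a + 1) * (n + 1) / k * (1 - a / (k - n)) ^ n := by
  have ha : 0 ≤ a := ht.trans hta
  have hP : 0 < (a + 1) * (n + 1) := by positivity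
  have hk0 : 0 < k := by nlinarith
  have hq : 1 - a / (k - n) = (a * n + t) / (a * n + t + a) := by
    rw [show k - n = a * n + t + a by linarith]
    field_simp
    ring
  have hx : 1 - ((a + 1) * (n + 1) / k)⁻¹ = (1 - t) / ((a + 1) * (n + 1)) := by
    rw [inv_div, show k = (a + 1) * (n + 1) + t - 1 by linarith]
    field_simp
    ring
  have hq' : 1 - ((a * n + t) / (a * n + t + a))⁻¹ = -(a / (a * n + t)) := by
    rw [inv_div, add_div, div_self hpos.ne']
    ring
  have key :
      -1 ≤ 1 - ((a + 1) * (n + 1) / k)⁻¹ + n * (1 - ((a * n + t) / (a * n + t + a))⁻¹) := by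
    rw [hx, hq', mul_neg, ← mul_div_assoc, ← sub_eq_add_neg, div_sub_div _ _ hP.ne' hpos.ne',
      le_div_iff₀ (mul_pos hP hpos)]
    nlinarith [mul_nonneg ht (show 0 ≤ a + 1 + n - t by linarith)]
  rw [hq]
  exact (exp_le_exp.2 key).trans (exp_le_mul_pow (by positivity) (by positivity) n)

lemma exp_neg_one_le_revealProb {k r m n t : ℕ} (hm : 2 ≤ m) (hrm : r + m = k) (htm : t < m)
    (hk : k + 1 = m * (n + 1) + t) :
    exp (-1) ≤ (revealProb k (n + 1) r : ℝ) := by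
  obtain ⟨N, rfl⟩ : ∃ N, k = N + 1 := ⟨k - 1, by omega⟩
  obtain ⟨s, rfl⟩ : ∃ s, m = s + 1 := ⟨m - 1, by omega⟩
  obtain rfl : r = N - s := by omega
  have hsn : s + n + 1 ≤ (s + 1) * (n + 1) := by nlinarith
  have hnN : 2 * (n + 1) ≤ (s + 1) * (n + 1) := Nat.mul_le_mul_right _ (by omega)
  have hpos : 0 < s * n + t := by
    rcases n with _ | n
    · omega
    · exact Nat.add_pos_left (Nat.mul_pos (by omega) n.succ_pos) t
  have hdf : (0 : ℝ) < N.descFactorial n := mod_cast Nat.descFactorial_pos.2 (by omega)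
  have hks : (N : ℝ) + 1 - (N - s : ℕ) = s + 1 := by
    push_cast [show s ≤ N by omega]
    ring
  rw [cast_revealProb_succ, hks]
  refine (exp_neg_one_le_mul_one_sub_div_pow (a := s) (t := t) (k := N + 1) n
    (Nat.cast_nonneg _) (by exact_mod_cast (by omega : t ≤ s)) (by exact_mod_cast hk)
    (by exact_mod_cast hpos)).trans ?_
  refine mul_le_mul_of_nonneg_left ?_ (by positivity)
  rw [le_div_iff₀ hdf]
  exact one_sub_div_pow_mul_descFactorial_le (by omega) (by omega)

/-- For `k ≥ 2` and `0 ≤ r ≤ k-1`, the revealing probability at the optimal degree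
satisfies `p(d(r), r) ≥ 1/e`. -/
theorem revealing_probability_at_optimal_degree_ge_inv_e
    (k : ℕ) (hk : 2 ≤ k) (r : ℕ) (hr : r ≤ k - 1) :
    1 / Real.exp 1 ≤ ((revealProb k (optDeg k r) r : ℚ) : ℝ) := by
  rcases eq_or_lt_of_le hr with rfl | hr
  · rw [optDeg, if_pos rfl, revealProb_self_pred (by omega), one_div, Rat.cast_one]
    exact inv_le_one_of_one_le₀ (one_le_exp zero_le_one)
  obtain ⟨n, hn⟩ :=
    Nat.exists_eq_add_one.2 (Nat.div_pos (show k - r ≤ k + 1 by omega) (by omega))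
  rw [optDeg_eq_div (by omega), hn, one_div, ← exp_neg]
  exact exp_neg_one_le_revealProb (m := k - r) (t := (k + 1) % (k - r)) (by omega) (by omega)
    (Nat.mod_lt _ (by omega)) (hn ▸ (Nat.div_add_mod _ _).symm)
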